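/- Let r be a positive integer and let G be a finite nonempty simple graph with r-splitter rank k. Then there exists an induced subgraph H of G with at most (2r+1)^(2^(k-1)-1) vertices such that the r-splitter rank of H equals k. -/

import Mathlib

open Classical

/-- The closed `r`-neighborhood of `c` inside the induced subgraph `G[A]`:
all vertices of `A` joined to `c` by a walk of length at most `r` staying in `A`. -/
noncomputable def ball {V : Type*} (G : SimpleGraph V) (r : ℕ) (A : Finset V) (c : V) :
    Finset V :=
  A.filter (fun v => ∃ p : G.Walk c v, p.length ≤ r ∧ ∀ x ∈ p.support, x ∈ A)

/-- The `r`-splitter rank of the induced subgraph `G[A]` (with `rank ∅ = 0`). -/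
noncomputable def splitterRank {V : Type*} [DecidableEq V] (G : SimpleGraph V) (r : ℕ)
    (A : Finset V) : ℕ :=
  if _ : A.Nonempty then
    1 + A.attach.sup (fun c =>
      (ball G r A c.1).attach.inf'
        (Finset.attach_nonempty_iff.2 ⟨c.1, Finset.mem_filter.2 ⟨c.2,
          SimpleGraph.Walk.nil, by simp, by simp [c.2]⟩⟩)
        (fun s => splitterRank G r ((ball G r A c.1).erase s.1)))
  else 0
termination_by A.card
decreasing_by
  exact lt_of_lt_of_le (Finset.card_erase_lt_of_mem s.2)
    (Finset.card_le_card (Finset.filter_subset _ _))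

/-!
A rank witness can be grown centre by centre. If `k < rk(A)` is witnessed by a centre `c`, take
a small set `H₀` of rank `≥ k` inside the ball around `c`, and for each `v ∈ H₀` a small set of
rank `≥ k` inside the ball avoiding `v`. Whatever vertex the splitter removes, one of these sets
survives, so adding `c` and, for each chosen vertex, a path of length `≤ r` from `c` to it yields
a set of rank `> k`. With `b` a size bound for rank `k` this gives the size bound
`1 + b (1 + b) r` for rank `k + 1`, and this recursion stays below `(2r+1)^(2^(k-1)-1)`.
-/

section Ball

variable {V : Type*} (G : SimpleGraph V) (r : ℕ)

lemma mem_ball_self {A : Finset V} {c : V} (hc : c ∈ A) : c ∈ ball G r A c :=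
  Finset.mem_filter.2 ⟨hc, .nil, by simp, by simp [hc]⟩

lemma ball_mono {A B : Finset V} (h : A ⊆ B) (c : V) : ball G r A c ⊆ ball G r B c := by
  intro v hv
  obtain ⟨hvA, p, hp, hsupp⟩ := Finset.mem_filter.1 hv
  exact Finset.mem_filter.2 ⟨h hvA, p, hp, fun x hx => h (hsupp x hx)⟩

variable [DecidableEq V]

lemma exists_subset_card_le_mem_ball {A : Finset V} {c w : V} (hw : w ∈ ball G r A c) :
    ∃ Q ⊆ A, c ∈ Q ∧ w ∈ ball G r Q c ∧ Q.card ≤ r + 1 := by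
  obtain ⟨-, p, hp, hsupp⟩ := Finset.mem_filter.1 hw
  refine ⟨p.support.toFinset, fun x hx => hsupp x (List.mem_toFinset.1 hx),
    List.mem_toFinset.2 p.start_mem_support, ?_, ?_⟩
  · exact Finset.mem_filter.2 ⟨List.mem_toFinset.2 p.end_mem_support, p, hp,
      fun x hx => List.mem_toFinset.2 hx⟩
  · calc p.support.toFinset.card ≤ p.support.length := List.toFinset_card_le _
      _ = p.length + 1 := p.length_support
      _ ≤ r + 1 := by omega

/-- The paths from `c` to the vertices of `W` share the vertex `c`, hence the `1 +`. -/
lemma exists_subset_card_le_subset_ball {A W : Finset V} {c : V} (hc : c ∈ A)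
    (hW : W ⊆ ball G r A c) :
    ∃ H ⊆ A, c ∈ H ∧ W ⊆ ball G r H c ∧ H.card ≤ 1 + W.card * r := by
  induction W using Finset.induction_on with
  | empty => exact ⟨{c}, by simpa using hc, by simp, by simp, by simp⟩
  | insert w W hwW ih =>
    obtain ⟨H, hHA, hcH, hWH, hHcard⟩ := ih ((Finset.subset_insert w W).trans hW)
    obtain ⟨Q, hQA, hcQ, hwQ, hQcard⟩ :=
      exists_subset_card_le_mem_ball G r (hW (Finset.mem_insert_self w W))
    refine ⟨H ∪ Q, Finset.union_subset hHA hQA, Finset.mem_union_left Q hcH, ?_, ?_⟩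
    · exact Finset.insert_subset (ball_mono G r Finset.subset_union_right c hwQ)
        (hWH.trans (ball_mono G r Finset.subset_union_left c))
    · have hinter : 1 ≤ (H ∩ Q).card := Finset.card_pos.2 ⟨c, Finset.mem_inter.2 ⟨hcH, hcQ⟩⟩
      have hunion := Finset.card_union_add_card_inter H Q
      rw [Finset.card_insert_of_notMem hwW, add_one_mul]
      omega

end Ball

section Rank

variable {V : Type*} [DecidableEq V] (G : SimpleGraph V) (r : ℕ)

lemma splitterRank_empty : splitterRank G r ∅ = 0 := by
  rw [splitterRank, dif_neg Finset.not_nonempty_empty]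

lemma lt_splitterRank_iff {A : Finset V} {m : ℕ} :
    m < splitterRank G r A ↔
      ∃ c ∈ A, ∀ s ∈ ball G r A c, m ≤ splitterRank G r ((ball G r A c).erase s) := by
  rcases A.eq_empty_or_nonempty with rfl | hA
  · simp [splitterRank_empty]
  rw [splitterRank, dif_pos hA, Nat.lt_one_add_iff,
    ← Finset.sup'_eq_sup (Finset.attach_nonempty_iff.2 hA), Finset.le_sup'_iff]
  simp only [Finset.le_inf'_iff, Finset.mem_attach, true_and, Subtype.exists, Subtype.forall,
    forall_const, exists_prop]

lemma splitterRank_pos {A : Finset V} (hA : A.Nonempty) : 0 < splitterRank G r A := by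
  obtain ⟨c, hc⟩ := hA
  exact (lt_splitterRank_iff G r).2 ⟨c, hc, fun _ _ => Nat.zero_le _⟩

lemma nonempty_of_splitterRank_pos {A : Finset V} (h : 0 < splitterRank G r A) : A.Nonempty := by
  rw [Finset.nonempty_iff_ne_empty]
  rintro rfl
  simp [splitterRank_empty] at h

/-- If the splitter removes a vertex outside the smaller ball, the smaller ball minus its
centre is still available. -/
lemma splitterRank_mono {A B : Finset V} (h : A ⊆ B) :
    splitterRank G r A ≤ splitterRank G r B := by
  suffices ∀ m (A B : Finset V), A ⊆ B → m ≤ splitterRank G r A → m ≤ splitterRank G r B from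
    this _ A B h le_rfl
  intro m
  induction m with
  | zero => exact fun _ _ _ _ => Nat.zero_le _
  | succ m ih =>
    intro A B hAB hm
    obtain ⟨c, hcA, hc⟩ := (lt_splitterRank_iff G r).1 hm
    refine (lt_splitterRank_iff G r).2 ⟨c, hAB hcA, fun s hs => ?_⟩
    by_cases hsA : s ∈ ball G r A c
    · exact ih _ _ (Finset.erase_subset_erase s (ball_mono G r hAB c)) (hc s hsA)
    · refine ih _ _ (fun x hx => ?_) (hc c (mem_ball_self G r hcA))
      have hxA := Finset.mem_of_mem_erase hx
      exact Finset.mem_erase.2 ⟨fun hxs => hsA (hxs ▸ hxA), ball_mono G r hAB c hxA⟩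

lemma lt_splitterRank_of_subset_ball {H H₀ : Finset V} {c : V} {k : ℕ} (hc : c ∈ H)
    (hH₀ : H₀ ⊆ ball G r H c) (hkH₀ : k ≤ splitterRank G r H₀)
    (havoid : ∀ v ∈ H₀, ∃ S ⊆ ball G r H c, v ∉ S ∧ k ≤ splitterRank G r S) :
    k < splitterRank G r H := by
  refine (lt_splitterRank_iff G r).2 ⟨c, hc, fun s _ => ?_⟩
  by_cases hs : s ∈ H₀
  · obtain ⟨S, hSball, hsS, hkS⟩ := havoid s hs
    exact hkS.trans (splitterRank_mono G r fun x hx =>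
      Finset.mem_erase.2 ⟨fun hxs => hsS (hxs ▸ hx), hSball hx⟩)
  · exact hkH₀.trans (splitterRank_mono G r fun x hx =>
      Finset.mem_erase.2 ⟨fun hxs => hs (hxs ▸ hx), hH₀ hx⟩)

end Rank

def witnessSize (r : ℕ) : ℕ → ℕ
  | 0 => 0
  | k + 1 => 1 + witnessSize r k * (1 + witnessSize r k) * r

lemma witnessSize_le (r : ℕ) : ∀ k, witnessSize r k ≤ (2 * r + 1) ^ (2 ^ (k - 1) - 1)
  | 0 => Nat.zero_le _
  | 1 => by simp [witnessSize]
  | k + 2 => by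
    set f := (2 * r + 1) ^ (2 ^ k - 1)
    have ih : witnessSize r (k + 1) ≤ f := witnessSize_le r (k + 1)
    have hf : 1 ≤ f := Nat.one_le_pow _ _ (by omega)
    have hexp : 2 ^ (k + 2 - 1) - 1 = 2 * (2 ^ k - 1) + 1 := by
      have := Nat.one_le_two_pow (n := k)
      rw [show k + 2 - 1 = k + 1 by omega, pow_succ]
      omega
    calc witnessSize r (k + 2) ≤ 1 + f * (1 + f) * r := by rw [witnessSize]; gcongr
      _ ≤ (2 * r + 1) * f ^ 2 := by nlinarith [Nat.mul_le_mul_left r (Nat.mul_le_mul hf hf)]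
      _ = (2 * r + 1) ^ (2 ^ (k + 2 - 1) - 1) := by
        rw [hexp, pow_succ (2 * r + 1), pow_mul', mul_comm]

theorem exists_subset_card_le_witnessSize {V : Type*} [DecidableEq V] (G : SimpleGraph V)
    (r : ℕ) {A : Finset V} {k : ℕ} (hk : k ≤ splitterRank G r A) :
    ∃ H ⊆ A, H.card ≤ witnessSize r k ∧ k ≤ splitterRank G r H := by
  induction k generalizing A with
  | zero => exact ⟨∅, Finset.empty_subset A, le_rfl, Nat.zero_le _⟩
  | succ k ih =>
    obtain ⟨c, hcA, hc⟩ := (lt_splitterRank_iff G r).1 hk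
    set B := ball G r A c
    obtain ⟨H₀, hH₀, hH₀card, hkH₀⟩ := ih (hc c (mem_ball_self G r hcA))
    have hH₀B : H₀ ⊆ B := hH₀.trans (Finset.erase_subset c B)
    choose! S hSsub hScard hkS using fun v (hv : v ∈ H₀) => ih (hc v (hH₀B hv))
    set W := H₀ ∪ H₀.biUnion S
    have hWB : W ⊆ B := Finset.union_subset hH₀B (Finset.biUnion_subset.2 fun v hv =>
      (hSsub v hv).trans (Finset.erase_subset v B))
    have hWcard : W.card ≤ witnessSize r k * (1 + witnessSize r k) :=
      calc W.card ≤ H₀.card + ∑ v ∈ H₀, (S v).card :=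
            (Finset.card_union_le _ _).trans (Nat.add_le_add_left Finset.card_biUnion_le _)
        _ ≤ H₀.card + H₀.card * witnessSize r k := by
            grw [Finset.sum_le_card_nsmul H₀ _ _ hScard, smul_eq_mul]
        _ ≤ witnessSize r k * (1 + witnessSize r k) := by rw [← mul_one_add]; gcongr
    obtain ⟨H, hHA, hcH, hWH, hHcard⟩ := exists_subset_card_le_subset_ball G r hcA hWB
    refine ⟨H, hHA, hHcard.trans (by rw [witnessSize]; gcongr), ?_⟩
    refine lt_splitterRank_of_subset_ball G r hcH (Finset.subset_union_left.trans hWH) hkH₀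
      fun v hv => ⟨S v, ?_, fun hvS => ?_, hkS v hv⟩
    · exact (Finset.subset_biUnion_of_mem S hv).trans (Finset.subset_union_right.trans hWH)
    · exact (Finset.mem_erase.1 (hSsub v hv hvS)).1 rfl

theorem small_subgraph_same_rank_general {V : Type*} [Fintype V] [DecidableEq V] [Nonempty V]
    (G : SimpleGraph V) (r k : ℕ)
    (hk : splitterRank G r Finset.univ = k) :
    ∃ H : Finset V, H.Nonempty ∧ H.card ≤ (2 * r + 1) ^ (2 ^ (k - 1) - 1) ∧
      splitterRank G r H = k := by
  have hkpos : 0 < k := hk ▸ splitterRank_pos G r Finset.univ_nonempty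
  obtain ⟨H, -, hHcard, hkH⟩ := exists_subset_card_le_witnessSize G r hk.ge
  refine ⟨H, nonempty_of_splitterRank_pos G r (hkpos.trans_le hkH),
    hHcard.trans (witnessSize_le r k), le_antisymm ?_ hkH⟩
  exact hk ▸ splitterRank_mono G r (Finset.subset_univ H)

/-- If `G` has `r`-splitter rank `k`, then `G` has an induced subgraph with at most
`(2r+1)^(2^(k-1)-1)` vertices whose `r`-splitter rank is also `k`. -/
theorem small_subgraph_same_rank {V : Type*} [Fintype V] [DecidableEq V] [Nonempty V]
    (G : SimpleGraph V) (r k : ℕ) (hr : 0 < r)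
    (hk : splitterRank G r Finset.univ = k) :
    ∃ H : Finset V, H.Nonempty ∧ H.card ≤ (2 * r + 1) ^ (2 ^ (k - 1) - 1) ∧
      splitterRank G r H = k :=
  small_subgraph_same_rank_general G r k hk
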